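/- arXiv:1709.08841 — 4 statements merged into one kernel-verified Lean document; each statement's English description precedes it below -/
import Mathlib

section
/- For all real x₁, x₂: x₁² + x₂² + 2x₁x₂ − 4x₁ − 4x₂ − (2 − 4√2) = (√2 − 1)(x₁ − x₂)² + √2(−√2 + x₁ + x₂)² + 2(√2 − 1)(1 − x₁² − x₂²), and consequently the minimum of x₁² + x₂² + 2x₁x₂ − 4x₁ − 4x₂ subject to x₁² + x₂² = 1 equals 2 − 4√2. -/
open Real

/-! On the circle `x₁² + x₂² = 1` the multiplier term of the certificate vanishes, so the
objective minus `2 - 4√2` equals a nonnegative combination of squares (its coefficients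
`√2 - 1` and `√2` are positive); both squares vanish at `x₁ = x₂ = √2/2`, which lies on the
circle, so the bound is attained. -/

theorem isLeast_of_sub_eq_nonneg_on {α β : Type*} {f g σ : α → β → ℝ} {m c : ℝ}
    (hcert : ∀ a b, g a b = c → f a b - m = σ a b) (hσ : ∀ a b, 0 ≤ σ a b)
    {a₀ : α} {b₀ : β} (hg₀ : g a₀ b₀ = c) (hσ₀ : σ a₀ b₀ = 0) :
    IsLeast {v : ℝ | ∃ a b, g a b = c ∧ v = f a b} m := by
  refine ⟨⟨a₀, b₀, hg₀, ?_⟩, ?_⟩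
  · linarith [hcert a₀ b₀ hg₀]
  · rintro v ⟨a, b, hg, rfl⟩
    linarith [hcert a b hg, hσ a b]

theorem circle_objective_sos_identity (x₁ x₂ : ℝ) :
    x₁^2 + x₂^2 + 2*x₁*x₂ - 4*x₁ - 4*x₂ - (2 - 4*Real.sqrt 2) =
      (Real.sqrt 2 - 1)*(x₁ - x₂)^2 + Real.sqrt 2 * (-Real.sqrt 2 + x₁ + x₂)^2
        + 2*(Real.sqrt 2 - 1)*(1 - x₁^2 - x₂^2) := by
  linear_combination (2 * (x₁ + x₂) - Real.sqrt 2) * Real.sq_sqrt (zero_le_two (α := ℝ))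

/-- Sum-of-squares certificate and the minimum of
`x₁² + x₂² + 2x₁x₂ − 4x₁ − 4x₂` on the unit circle. -/
theorem sos_certificate_circle_min :
    (∀ x₁ x₂ : ℝ,
      x₁^2 + x₂^2 + 2*x₁*x₂ - 4*x₁ - 4*x₂ - (2 - 4*Real.sqrt 2) =
        (Real.sqrt 2 - 1)*(x₁ - x₂)^2 + Real.sqrt 2 * (-Real.sqrt 2 + x₁ + x₂)^2
          + 2*(Real.sqrt 2 - 1)*(1 - x₁^2 - x₂^2)) ∧
    IsLeast {v : ℝ | ∃ x₁ x₂ : ℝ, x₁^2 + x₂^2 = 1 ∧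
      v = x₁^2 + x₂^2 + 2*x₁*x₂ - 4*x₁ - 4*x₂} (2 - 4*Real.sqrt 2) := by
  refine ⟨circle_objective_sos_identity, ?_⟩
  have hsq : Real.sqrt 2 ^ 2 = 2 := Real.sq_sqrt zero_le_two
  have hone : 1 ≤ Real.sqrt 2 := Real.one_le_sqrt.mpr one_le_two
  refine isLeast_of_sub_eq_nonneg_on (σ := fun x₁ x₂ =>
      (Real.sqrt 2 - 1)*(x₁ - x₂)^2 + Real.sqrt 2 * (-Real.sqrt 2 + x₁ + x₂)^2)
    (a₀ := Real.sqrt 2 / 2) (b₀ := Real.sqrt 2 / 2)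
    (fun x₁ x₂ hc => by
      linear_combination circle_objective_sos_identity x₁ x₂ - 2 * (Real.sqrt 2 - 1) * hc)
    (fun x₁ x₂ => by positivity [sub_nonneg.mpr hone]) ?_ ?_
  · linear_combination hsq / 2
  · ring
end

section
/- The optimal value of the LP: minimize y₂ − y₁ subject to y₁ ≥ 0, 1 − y₁ ≥ 0, y₂ ≥ 0, y₁ − y₂ ≥ 0, 1 − 2y₁ + y₂ ≥ 0, y₃ ≥ 0, y₂ − y₃ ≥ 0, y₁ − 2y₂ + y₃ ≥ 0, 1 − 3y₁ + 3y₂ − y₃ ≥ 0, is −1/3, attained at (y₁, y₂, y₃) = (1/3, 0, 0). -/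
/-- The third-order LP relaxation of `min x(x−1)` over `[0,1]` has optimal
value `−1/3`, attained at `(y₁, y₂, y₃) = (1/3, 0, 0)`. -/
theorem third_order_lp_relaxation_value :
    IsLeast {v : ℝ | ∃ y₁ y₂ y₃ : ℝ,
        0 ≤ y₁ ∧ 0 ≤ 1 - y₁ ∧ 0 ≤ y₂ ∧ 0 ≤ y₁ - y₂ ∧ 0 ≤ 1 - 2*y₁ + y₂ ∧
        0 ≤ y₃ ∧ 0 ≤ y₂ - y₃ ∧ 0 ≤ y₁ - 2*y₂ + y₃ ∧ 0 ≤ 1 - 3*y₁ + 3*y₂ - y₃ ∧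
        v = y₂ - y₁} (-(1/3)) ∧
    (0 ≤ (1/3 : ℝ) ∧ 0 ≤ 1 - (1/3 : ℝ) ∧ 0 ≤ (0 : ℝ) ∧ 0 ≤ (1/3 : ℝ) - 0 ∧
      0 ≤ 1 - 2*(1/3 : ℝ) + 0 ∧ 0 ≤ (0 : ℝ) ∧ 0 ≤ (0 : ℝ) - 0 ∧
      0 ≤ (1/3 : ℝ) - 2*0 + 0 ∧ 0 ≤ 1 - 3*(1/3 : ℝ) + 3*0 - 0 ∧
      (0 : ℝ) - 1/3 = -(1/3)) := by
  refine ⟨⟨⟨1/3, 0, 0, by norm_num⟩, ?_⟩, by norm_num⟩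
  rintro v ⟨y₁, y₂, y₃, -, -, -, -, -, hy₃, -, -, hcubic, rfl⟩
  -- Dual certificate: one third each of the linearizations of `x³ ≥ 0` and `(1 - x)³ ≥ 0`.
  linear_combination (1/3) * hy₃ + (1/3) * hcubic
end

section
/- The minimum of x(x−1) over x ∈ [0,1] equals −1/4, and for every integer r ≥ 2 the r-th order LP relaxation value (obtained by replacing xᵏ with variables yₖ and imposing nonnegativity of all products x^i(1−x)^j with i+j ≤ r expanded linearly in y) is strictly less than −1/4. -/
open Finset

/-!
The moments `y k = (1/2)^k` of the point `x = 1/2` satisfy every Sherali–Adams constraint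
strictly: the linearization of `x^i (1-x)^j` evaluates to `(1/2)^(i+j) ≥ (1/2)^r`. Raising the
first moment by a small `ε` changes each constraint by at most `r ε`, so the perturbed sequence
stays feasible while its objective `y 2 - y 1` drops to `-1/4 - ε`. Meanwhile the constraints
`x^2 ≥ 0` and `1 - x ≥ 0` bound the objective below by `-1`, so the infimum is at most `-1/4 - ε`.
-/

/-- Feasibility for the `r`-th order Krivine/Sherali–Adams LP relaxation of
`min x(x−1)` over `0 ≤ x ≤ 1`: `y k` stands for `x^k`, and the linearization of
every product `x^i (1−x)^j` with `i + j ≤ r` is required to be nonnegative. -/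
def lpRelaxFeasible (r : ℕ) (y : ℕ → ℝ) : Prop :=
  y 0 = 1 ∧ ∀ i j : ℕ, i + j ≤ r →
    0 ≤ ∑ k ∈ Finset.range (j + 1), (-1 : ℝ) ^ k * (j.choose k) * y (i + k)

def linearizedMonomial (i j : ℕ) (y : ℕ → ℝ) : ℝ :=
  ∑ k ∈ range (j + 1), (-1 : ℝ) ^ k * (j.choose k) * y (i + k)

lemma linearizedMonomial_add (i j : ℕ) (y z : ℕ → ℝ) :
    linearizedMonomial i j (y + z) = linearizedMonomial i j y + linearizedMonomial i j z := by
  simp only [linearizedMonomial, Pi.add_apply, mul_add, sum_add_distrib]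

lemma linearizedMonomial_pow (i j : ℕ) (x : ℝ) :
    linearizedMonomial i j (fun k => x ^ k) = x ^ i * (1 - x) ^ j := by
  rw [linearizedMonomial, sub_eq_neg_add, add_pow, mul_sum]
  refine sum_congr rfl fun k _ => ?_
  rw [neg_pow, one_pow, pow_add]
  ring

lemma linearizedMonomial_single_one (i j : ℕ) (ε : ℝ) :
    linearizedMonomial i j (Pi.single 1 ε) =
      if i = 0 then -(j * ε) else if i = 1 then ε else 0 := by
  rcases i with _ | _ | i
  · rcases j with _ | j
    · simp [linearizedMonomial]
    rw [linearizedMonomial, sum_eq_single 1]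
    · simp only [Pi.single_eq_same, ↓reduceIte, Nat.choose_one_right, pow_one, zero_add]
      push_cast
      ring
    · intro k _ hk
      simp [hk]
    · simp
  · rw [linearizedMonomial, sum_eq_single 0]
    · simp
    · intro k _ hk
      simp [hk]
    · simp
  · refine sum_eq_zero fun k _ => ?_
    simp [show i + 1 + 1 + k ≠ 1 by omega]

lemma lpRelaxFeasible_iff (r : ℕ) (y : ℕ → ℝ) :
    lpRelaxFeasible r y ↔ y 0 = 1 ∧ ∀ i j : ℕ, i + j ≤ r → 0 ≤ linearizedMonomial i j y :=
  Iff.rfl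

lemma lpRelaxFeasible_half_moments_add_single_one {r : ℕ} {ε : ℝ} (hε : 0 ≤ ε)
    (hεr : r * ε ≤ (1 / 2) ^ r) :
    lpRelaxFeasible r ((fun k => (1 / 2 : ℝ) ^ k) + Pi.single 1 ε) := by
  rw [lpRelaxFeasible_iff]
  refine ⟨by simp, fun i j hij => ?_⟩
  rw [linearizedMonomial_add, linearizedMonomial_pow, linearizedMonomial_single_one,
    show (1 - 1 / 2 : ℝ) = 1 / 2 by norm_num, ← pow_add]
  have hpow : (1 / 2 : ℝ) ^ r ≤ (1 / 2) ^ (i + j) :=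
    pow_le_pow_of_le_one (by norm_num) (by norm_num) hij
  have hj : (j : ℝ) * ε ≤ r * ε :=
    mul_le_mul_of_nonneg_right (by exact_mod_cast (Nat.le_add_left j i).trans hij) hε
  split_ifs <;> linarith [pow_nonneg (by norm_num : (0 : ℝ) ≤ 1 / 2) (i + j)]

lemma lpRelaxFeasible.neg_one_le {r : ℕ} {y : ℕ → ℝ} (hy : lpRelaxFeasible r y) (hr : 2 ≤ r) :
    -1 ≤ y 2 - y 1 := by
  obtain ⟨hy0, hlin⟩ := hy
  have hsq := hlin 2 0 (by omega)
  have hcompl := hlin 0 1 (by omega)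
  simp only [sum_range_succ, sum_range_zero] at hsq hcompl
  norm_num [hy0] at hsq hcompl
  linarith

lemma isLeast_mul_sub_one_Icc :
    IsLeast {v : ℝ | ∃ x : ℝ, 0 ≤ x ∧ x ≤ 1 ∧ v = x * (x - 1)} (-(1 / 4)) := by
  refine ⟨⟨1 / 2, by norm_num⟩, ?_⟩
  rintro v ⟨x, -, -, rfl⟩
  nlinarith [sq_nonneg (x - 1 / 2)]

/-- The minimum of `x(x−1)` over `[0,1]` equals `−1/4`, and for every `r ≥ 2`
the `r`-th order LP relaxation value is strictly less than `−1/4`. -/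
theorem lp_hierarchy_not_finitely_convergent :
    IsLeast {v : ℝ | ∃ x : ℝ, 0 ≤ x ∧ x ≤ 1 ∧ v = x * (x - 1)} (-(1/4)) ∧
    ∀ r : ℕ, 2 ≤ r →
      sInf {v : ℝ | ∃ y : ℕ → ℝ, lpRelaxFeasible r y ∧ v = y 2 - y 1} < -(1/4) := by
  refine ⟨isLeast_mul_sub_one_Icc, fun r hr => ?_⟩
  have hr0 : (0 : ℝ) < r := by exact_mod_cast (by omega : 0 < r)
  set ε : ℝ := (1 / 2) ^ r / r
  have hε : 0 < ε := by positivity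
  have hεr : r * ε = (1 / 2) ^ r := mul_div_cancel₀ _ hr0.ne'
  have hfeas := lpRelaxFeasible_half_moments_add_single_one hε.le hεr.le
  have hbdd : BddBelow {v : ℝ | ∃ y : ℕ → ℝ, lpRelaxFeasible r y ∧ v = y 2 - y 1} := by
    refine ⟨-1, ?_⟩
    rintro v ⟨y, hy, rfl⟩
    exact hy.neg_one_le hr
  calc sInf {v : ℝ | ∃ y : ℕ → ℝ, lpRelaxFeasible r y ∧ v = y 2 - y 1}
      ≤ -(1 / 4) - ε := csInf_le hbdd ⟨_, hfeas, by norm_num; ring⟩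
    _ < -(1 / 4) := by linarith
end

section
/- Let W = W₀ + UUᵀ with W₀ symmetric positive definite and U of rank at most θ, and let H = Aᵀ(W ⊗ W)A for a full-column-rank A. Then H decomposes as H = Aᵀ(W₀ ⊗ W₀)A + UUᵀ-type low-rank term: specifically H = Aᵀ(W₀⊗W₀)A + Aᵀ(U⊗Z)(U⊗Z)ᵀA where Z satisfies ZZᵀ = 2W₀ + UUᵀ, and the matrix Aᵀ(U⊗Z)(U⊗Z)ᵀA has rank at most nθ. -/
open Matrix Kronecker

/-
Write `S = UUᵀ`. Expanding, `W ⊗ W - W₀ ⊗ W₀ = W₀ ⊗ S + S ⊗ W₀ + S ⊗ S`, while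
`(U ⊗ Z)(U ⊗ Z)ᵀ = S ⊗ ZZᵀ = 2 (S ⊗ W₀) + S ⊗ S`. The two differ by `W₀ ⊗ S - S ⊗ W₀`, which
is invisible to `Aᵀ (·) A`: the columns of `A` are vectorised symmetric matrices, so `A` is
fixed by the commutation permutation `(i, j) ↦ (j, i)`, and conjugating `B ⊗ C` by that
permutation gives `C ⊗ B`. The rank bound holds because `U ⊗ Z` has `θ n` columns.
-/

namespace Matrix

variable {ι κ R : Type*}

theorem kronecker_submatrix_swap [CommMagma R] (B C : Matrix ι ι R) :
    (B ⊗ₖ C).submatrix Prod.swap Prod.swap = C ⊗ₖ B := by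
  ext ⟨i, j⟩ ⟨k, l⟩
  exact mul_comm _ _

theorem transpose_mul_submatrix_swap_mul [Fintype ι] [NonUnitalNonAssocSemiring R]
    (A : Matrix (ι × ι) κ R) (hA : A.submatrix Prod.swap id = A)
    (M : Matrix (ι × ι) (ι × ι) R) :
    Aᵀ * (M.submatrix Prod.swap Prod.swap * A) = Aᵀ * (M * A) := by
  have hAt : Aᵀ.submatrix id Prod.swap = Aᵀ := by
    rw [← transpose_submatrix, hA]
  calc Aᵀ * (M.submatrix Prod.swap Prod.swap * A)
      = Aᵀ.submatrix id (Equiv.prodComm ι ι) *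
          (M.submatrix (Equiv.prodComm ι ι) (Equiv.prodComm ι ι) *
            A.submatrix (Equiv.prodComm ι ι) id) := by
        rw [Equiv.coe_prodComm, hAt, hA]
    _ = Aᵀ * (M * A) := by
        rw [submatrix_mul_equiv, submatrix_mul_equiv, submatrix_id_id]

theorem transpose_mul_kronecker_mul_comm [Fintype ι] [CommSemiring R]
    (A : Matrix (ι × ι) κ R) (hA : A.submatrix Prod.swap id = A) (B C : Matrix ι ι R) :
    Aᵀ * ((B ⊗ₖ C) * A) = Aᵀ * ((C ⊗ₖ B) * A) := by
  rw [← transpose_mul_submatrix_swap_mul A hA, kronecker_submatrix_swap]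

theorem transpose_mul_add_kronecker_add_mul [Fintype ι] [CommSemiring R]
    (A : Matrix (ι × ι) κ R) (hA : A.submatrix Prod.swap id = A) (X Y : Matrix ι ι R) :
    Aᵀ * (((X + Y) ⊗ₖ (X + Y)) * A) =
      Aᵀ * ((X ⊗ₖ X) * A) + Aᵀ * ((Y ⊗ₖ ((2 : R) • X + Y)) * A) := by
  simp only [add_kronecker, kronecker_add, kronecker_smul, Matrix.add_mul, Matrix.mul_add,
    Matrix.smul_mul, Matrix.mul_smul, transpose_mul_kronecker_mul_comm A hA X Y]
  module

end Matrix

theorem hessian_low_rank_decomposition_general {n θ m : ℕ}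
    (W₀ : Matrix (Fin n) (Fin n) ℝ)
    (U : Matrix (Fin n) (Fin θ) ℝ) (Z : Matrix (Fin n) (Fin n) ℝ)
    (hZ : Z * Zᵀ = (2 : ℝ) • W₀ + U * Uᵀ)
    (As : Fin m → Matrix (Fin n) (Fin n) ℝ) (hsym : ∀ k, (As k).IsSymm)
    (A : Matrix (Fin n × Fin n) (Fin m) ℝ)
    (hA : A = Matrix.of fun p k => As k p.1 p.2) :
    Aᵀ * (((W₀ + U * Uᵀ) ⊗ₖ (W₀ + U * Uᵀ)) * A) =
        Aᵀ * ((W₀ ⊗ₖ W₀) * A) + Aᵀ * ((U ⊗ₖ Z) * ((U ⊗ₖ Z)ᵀ * A)) ∧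
      (U ⊗ₖ Z).rank ≤ n * θ ∧
      (Aᵀ * ((U ⊗ₖ Z) * ((U ⊗ₖ Z)ᵀ * A))).rank ≤ n * θ := by
  have hA_swap : A.submatrix Prod.swap id = A := by
    subst hA
    ext ⟨i, j⟩ k
    exact (hsym k).apply i j
  have hUZ : (U ⊗ₖ Z) * (U ⊗ₖ Z)ᵀ = (U * Uᵀ) ⊗ₖ (Z * Zᵀ) := by
    rw [← kroneckerMap_transpose, mul_kronecker_mul]
  have hrk : (U ⊗ₖ Z).rank ≤ n * θ := by
    simpa [mul_comm] using (U ⊗ₖ Z).rank_le_card_width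
  refine ⟨?_, hrk, ?_⟩
  · rw [← Matrix.mul_assoc (U ⊗ₖ Z), hUZ, hZ]
    exact transpose_mul_add_kronecker_add_mul A hA_swap W₀ (U * Uᵀ)
  · calc (Aᵀ * ((U ⊗ₖ Z) * ((U ⊗ₖ Z)ᵀ * A))).rank
        ≤ ((U ⊗ₖ Z) * ((U ⊗ₖ Z)ᵀ * A)).rank := rank_mul_le_right _ _
      _ ≤ (U ⊗ₖ Z).rank := rank_mul_le_left _ _
      _ ≤ n * θ := hrk

/-- Decomposition of the interior-point Hessian matrix `H = 𝐀ᵀ(W ⊗ W)𝐀` for a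
scaling matrix `W = W₀ + UUᵀ`: with `Z Zᵀ = 2W₀ + UUᵀ` one has
`H = 𝐀ᵀ(W₀ ⊗ W₀)𝐀 + 𝐀ᵀ(U ⊗ Z)(U ⊗ Z)ᵀ𝐀`, and the low-rank term has rank at
most `nθ` (indeed `rank (U ⊗ Z) ≤ nθ`). -/
theorem hessian_low_rank_decomposition {n θ m : ℕ}
    (W₀ : Matrix (Fin n) (Fin n) ℝ) (hW₀ : W₀.PosDef)
    (U : Matrix (Fin n) (Fin θ) ℝ) (Z : Matrix (Fin n) (Fin n) ℝ)
    (hZ : Z * Zᵀ = (2 : ℝ) • W₀ + U * Uᵀ)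
    (As : Fin m → Matrix (Fin n) (Fin n) ℝ) (hsym : ∀ k, (As k).IsSymm)
    (A : Matrix (Fin n × Fin n) (Fin m) ℝ)
    (hA : A = Matrix.of fun p k => As k p.1 p.2)
    (hrank : Function.Injective fun y : Fin m → ℝ => A *ᵥ y) :
    Aᵀ * (((W₀ + U * Uᵀ) ⊗ₖ (W₀ + U * Uᵀ)) * A) =
        Aᵀ * ((W₀ ⊗ₖ W₀) * A) + Aᵀ * ((U ⊗ₖ Z) * ((U ⊗ₖ Z)ᵀ * A)) ∧
      (U ⊗ₖ Z).rank ≤ n * θ ∧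
      (Aᵀ * ((U ⊗ₖ Z) * ((U ⊗ₖ Z)ᵀ * A))).rank ≤ n * θ :=
  hessian_low_rank_decomposition_general W₀ U Z hZ As hsym A hA
end
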